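/- The quadridiagonal univariate Laguerre production matrix P, with entries p_{n,n+1} = 1, p_{n,n} = (2n+λ)+x, p_{n,n-1} = n(n-1+λ)+2nx, p_{n,n-2} = n(n-1)x, and zero otherwise, factors as P = L·(L·U_x + λI), where L is the lower-bidiagonal matrix with 1 on the diagonal and 1,2,3,... on the subdiagonal, and U_x is the upper-bidiagonal matrix with 1 on the superdiagonal and x on the diagonal. Consequently P is totally positive in ℤ[x,λ] with the coefficientwise order. -/

import Mathlib

/-- Row-finite infinite matrices: each row is a finitely supported function. -/
def RFMat (R : Type*) [Zero R] := ℕ → (ℕ →₀ R)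

namespace RFMat

variable {R : Type*} [CommRing R]

/-- Matrix product of row-finite matrices: `(P*Q)_{ik} = ∑_j P_{ij} Q_{jk}`. -/
noncomputable def mul (P Q : RFMat R) : RFMat R :=
  fun i => (P i).sum fun j a => a • Q j

end RFMat

/-- The ring `ℤ[x,λ]`. -/
abbrev Rxl : Type := MvPolynomial (Fin 2) ℤ

/-- The indeterminate `x`. -/
noncomputable def xv : Rxl := MvPolynomial.X 0

/-- The indeterminate `λ`. -/
noncomputable def lv : Rxl := MvPolynomial.X 1

/-- The quadridiagonal univariate Laguerre production matrix `P` over `ℤ[x,λ]`: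
`p_{n,n+1} = 1`, `p_{n,n} = (2n+λ)+x`, `p_{n,n-1} = n(n-1+λ)+2nx`,
`p_{n,n-2} = n(n-1)x`. -/
noncomputable def Pquad : RFMat Rxl :=
  fun n => Finsupp.single (n + 1) 1
    + Finsupp.single n (2 * (n : Rxl) + lv + xv)
    + Finsupp.single (n - 1) ((n : Rxl) * ((n : Rxl) - 1 + lv) + 2 * (n : Rxl) * xv)
    + Finsupp.single (n - 2) ((n : Rxl) * ((n : Rxl) - 1) * xv)

/-- The lower-bidiagonal matrix `L` with `1` on the diagonal and `1,2,3,…` on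
the subdiagonal. -/
noncomputable def Lmat : RFMat Rxl :=
  fun n => Finsupp.single n 1 + Finsupp.single (n - 1) (n : Rxl)

/-- The upper-bidiagonal matrix `U_x` with `1` on the superdiagonal and `x` on
the diagonal. -/
noncomputable def Uxmat : RFMat Rxl :=
  fun n => Finsupp.single (n + 1) 1 + Finsupp.single n xv

/-!
Row `n` of `P` is row `n` of `T = L·U_x + λI` plus `n` times row `n - 1`; this is the
factorization. Expanding a minor of `P` row by row writes it as a combination, with coefficients
in `ℕ`, of minors of `T` with weakly increasing row indices, so total positivity passes from `T`
to `P`. The tridiagonal `T` has nonnegative entries, and a gap of two between consecutive row or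
column indices makes a minor block triangular, so every minor of `T` is a product of entries and
contiguous principal minors `D(n, m)`. These satisfy
`D(n, m + 2) = (x + λ + n) D(n + 1, m + 1) - (n + 1) x D(n + 2, m)`, and induction on `m` shows
that both `D(n, m)` and `D(n, m + 1) - (λ + n) D(n + 1, m)` have nonnegative coefficients.
-/

theorem Fin.eq_add_of_succ_lt_add_two {n : ℕ} {r c : Fin (n + 2) → ℕ} (hr : StrictMono r)
    (hc : StrictMono c)
    (h : ∀ i : Fin (n + 1), r i.succ < c i.castSucc + 2 ∧ c i.succ < r i.castSucc + 2) :
    r = (fun p : Fin (n + 2) => r 0 + p) ∧ c = (fun p : Fin (n + 2) => r 0 + p) := by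
  have hstep (i : Fin (n + 1)) :
      r i.succ = r i.castSucc + 1 ∧ c i.succ = r i.succ ∧ c i.castSucc = r i.castSucc := by
    have := hr i.castSucc_lt_succ
    have := hc i.castSucc_lt_succ
    have := h i
    omega
  have hr' : ∀ p : Fin (n + 2), r p = r 0 + p := by
    intro p
    induction p using Fin.induction with
    | zero => simp
    | succ i ih => rw [(hstep i).1, ih]; simp [add_assoc]
  refine ⟨funext hr', funext fun p => ?_⟩
  rw [← hr' p]
  cases p using Fin.cases with
  | zero => exact (hstep 0).2.2
  | succ i => exact (hstep i).2.1

namespace Matrix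

variable {R : Type*} [CommRing R] {S : Subsemiring R}

theorem det_eq_mul_of_natAdd_castAdd_eq_zero {k l : ℕ} (M : Matrix (Fin (k + l)) (Fin (k + l)) R)
    (h : ∀ i j, M (Fin.natAdd k i) (Fin.castAdd l j) = 0) :
    M.det = (M.submatrix (Fin.castAdd l) (Fin.castAdd l)).det *
      (M.submatrix (Fin.natAdd k) (Fin.natAdd k)).det := by
  rw [← det_submatrix_equiv_self finSumFinEquiv M, ← fromBlocks_toBlocks (M.submatrix _ _),
    show (M.submatrix finSumFinEquiv finSumFinEquiv).toBlocks₂₁ = 0 from ext fun i j => h i j,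
    det_fromBlocks_zero₂₁]
  rfl

theorem det_eq_mul_of_castAdd_natAdd_eq_zero {k l : ℕ} (M : Matrix (Fin (k + l)) (Fin (k + l)) R)
    (h : ∀ i j, M (Fin.castAdd l i) (Fin.natAdd k j) = 0) :
    M.det = (M.submatrix (Fin.castAdd l) (Fin.castAdd l)).det *
      (M.submatrix (Fin.natAdd k) (Fin.natAdd k)).det := by
  rw [← det_transpose M, det_eq_mul_of_natAdd_castAdd_eq_zero Mᵀ fun i j => h j i,
    ← transpose_submatrix, ← transpose_submatrix, det_transpose, det_transpose]

def IsTotallyPositive {α β : Type*} [LinearOrder α] [LinearOrder β] (S : Subsemiring R)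
    (A : Matrix α β R) : Prop :=
  ∀ (m : ℕ) (r : Fin m → α) (c : Fin m → β), StrictMono r → StrictMono c →
    (A.submatrix r c).det ∈ S

def contiguousMinor (T : Matrix ℕ ℕ R) (n m : ℕ) : R :=
  (T.submatrix (fun p : Fin m => n + p) (fun p : Fin m => n + p)).det

theorem contiguousMinor_add_two {T : Matrix ℕ ℕ R}
    (hband : ∀ i j, i + 2 ≤ j ∨ j + 2 ≤ i → T i j = 0) (n m : ℕ) :
    T.contiguousMinor n (m + 2) = T n n * T.contiguousMinor (n + 1) (m + 1) -
      T n (n + 1) * T (n + 1) n * T.contiguousMinor (n + 2) m := by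
  set M := T.submatrix (fun p : Fin (m + 2) => n + p) (fun p : Fin (m + 2) => n + p)
  have hrow : ∀ j : Fin m, M 0 j.succ.succ = 0 := fun j => hband _ _ (Or.inl (by simp))
  have hcol : ∀ i : Fin m, (M.submatrix Fin.succ (Fin.succAbove 1)) i.succ 0 = 0 :=
    fun i => hband _ _ (Or.inr (by simp [Fin.succAbove]))
  have hM1 : (M.submatrix Fin.succ (Fin.succAbove 1)).det =
      T (n + 1) n * T.contiguousMinor (n + 2) m := by
    rw [det_succ_column_zero, Fin.sum_univ_succ,
      Finset.sum_eq_zero fun i _ => by rw [hcol i, mul_zero, zero_mul], add_zero]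
    simp only [Fin.val_zero, pow_zero, one_mul, submatrix_submatrix, contiguousMinor, M]
    congr 2
    ext p q
    simp [Fin.succAbove]
    congr 1 <;> omega
  have hM0 : (M.submatrix Fin.succ (Fin.succAbove 0)).det = T.contiguousMinor (n + 1) (m + 1) := by
    simp only [submatrix_submatrix, contiguousMinor, M]
    congr 1
    ext p q
    simp
    congr 1 <;> omega
  change M.det = _
  rw [det_succ_row_zero, Fin.sum_univ_succ, Fin.sum_univ_succ,
    Finset.sum_eq_zero fun j _ => by rw [hrow j, mul_zero, zero_mul]]
  rw [Fin.succ_zero_eq_one, hM0, hM1]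
  simp [M]
  ring

namespace IsTotallyPositive

theorem det_submatrix_mem_of_monotone {α β : Type*} [LinearOrder α] [LinearOrder β]
    {A : Matrix α β R} (hA : A.IsTotallyPositive S) {m : ℕ} {r : Fin m → α} {c : Fin m → β}
    (hr : Monotone r) (hc : StrictMono c) : (A.submatrix r c).det ∈ S := by
  by_cases hinj : Function.Injective r
  · exact hA m r c (hr.strictMono_of_injective hinj) hc
  · obtain ⟨p, q, hpq, hne⟩ := Function.not_injective_iff.mp hinj
    rw [det_zero_of_row_eq hne (funext fun j => by simp [hpq])]
    exact S.zero_mem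

theorem lowerBidiagonal_mul {T : Matrix ℕ ℕ R} (hT : T.IsTotallyPositive S) {d a : ℕ → R}
    (hd : ∀ n, d n ∈ S) (ha : ∀ n, a n ∈ S) :
    (of fun n k => d n * T n k + a n * T (n - 1) k).IsTotallyPositive S := by
  classical
  intro m r c hr hc
  have hdet (M : Matrix (Fin m) (Fin m) R) : M.det = detRowAlternating.toMultilinearMap M := rfl
  rw [hdet, show (of fun n k => d n * T n k + a n * T (n - 1) k).submatrix r c =
      (fun p q => d (r p) * T (r p) (c q)) + fun p q => a (r p) * T (r p - 1) (c q) from rfl,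
    MultilinearMap.map_add_univ]
  refine S.sum_mem fun s _ => ?_
  -- Row `p` of the `s`-th term is row `ρ p` of `T`; `r p - 1 ≤ ρ p ≤ r p` makes `ρ` monotone.
  set ρ : Fin m → ℕ := fun p => if p ∈ s then r p else r p - 1
  have hρ : Monotone ρ := by
    intro p q hpq
    rcases hpq.lt_or_eq with hlt | rfl
    · have := hr hlt
      simp only [ρ]
      split_ifs <;> omega
    · rfl
  have hpiece : s.piecewise (fun p q => d (r p) * T (r p) (c q))
      (fun p q => a (r p) * T (r p - 1) (c q)) =
      of fun p q => (if p ∈ s then d (r p) else a (r p)) * T (ρ p) (c q) := by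
    ext p q
    by_cases hp : p ∈ s <;> simp [hp, ρ]
  erw [← hdet, hpiece, det_mul_column]
  refine S.mul_mem (S.prod_mem fun p _ => ?_) (hT.det_submatrix_mem_of_monotone hρ hc)
  split_ifs
  exacts [hd _, ha _]

end IsTotallyPositive

theorem isTotallyPositive_of_tridiagonal {T : Matrix ℕ ℕ R}
    (hband : ∀ i j, i + 2 ≤ j ∨ j + 2 ≤ i → T i j = 0) (hentry : ∀ i j, T i j ∈ S)
    (hprincipal : ∀ n m, T.contiguousMinor n m ∈ S) :
    T.IsTotallyPositive S := by
  intro m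
  induction m using Nat.strong_induction_on with | _ m ih =>
  intro r c hr hc
  rcases m with _ | n
  · simp
  by_cases hgap : ∃ i : Fin n, c i.castSucc + 2 ≤ r i.succ ∨ r i.castSucc + 2 ≤ c i.succ
  · obtain ⟨i, hi⟩ := hgap
    obtain ⟨l, hl⟩ : ∃ l, (i + 1 : ℕ) + l = n + 1 := ⟨n - i, by omega⟩
    set e := finCongr hl
    have he : StrictMono e := fun _ _ h => h
    have hhead := ih (i + 1) (by omega) (r ∘ e ∘ Fin.castAdd l) (c ∘ e ∘ Fin.castAdd l)
      (hr.comp (he.comp (Fin.strictMono_castAdd l))) (hc.comp (he.comp (Fin.strictMono_castAdd l)))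
    have htail := ih l (by omega) (r ∘ e ∘ Fin.natAdd (i + 1)) (c ∘ e ∘ Fin.natAdd (i + 1))
      (hr.comp (he.comp (Fin.strictMono_natAdd _))) (hc.comp (he.comp (Fin.strictMono_natAdd _)))
    rw [← det_submatrix_equiv_self e]
    rcases hi with hi | hi
    · have hzero (a : Fin l) (b : Fin (i + 1)) :
          T (r (e (Fin.natAdd _ a))) (c (e (Fin.castAdd l b))) = 0 := by
        have := hc.monotone (a := e (Fin.castAdd l b)) (b := i.castSucc)
          (by simp [Fin.le_def, e]; omega)
        have := hr.monotone (a := i.succ) (b := e (Fin.natAdd _ a)) (by simp [Fin.le_def, e])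
        exact hband _ _ (Or.inr (by omega))
      rw [det_eq_mul_of_natAdd_castAdd_eq_zero _ hzero]
      exact S.mul_mem hhead htail
    · have hzero (a : Fin (i + 1)) (b : Fin l) :
          T (r (e (Fin.castAdd l a))) (c (e (Fin.natAdd _ b))) = 0 := by
        have := hr.monotone (a := e (Fin.castAdd l a)) (b := i.castSucc)
          (by simp [Fin.le_def, e]; omega)
        have := hc.monotone (a := i.succ) (b := e (Fin.natAdd _ b)) (by simp [Fin.le_def, e])
        exact hband _ _ (Or.inl (by omega))
      rw [det_eq_mul_of_castAdd_natAdd_eq_zero _ hzero]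
      exact S.mul_mem hhead htail
  · push Not at hgap
    rcases n with _ | n
    · rw [det_fin_one]; exact hentry _ _
    obtain ⟨hr0, hc0⟩ := Fin.eq_add_of_succ_lt_add_two hr hc hgap
    rw [hr0, hc0]
    exact hprincipal _ _

end Matrix

namespace MvPolynomial

def nonnegCoeffs (σ R : Type*) [CommSemiring R] [PartialOrder R] [IsOrderedRing R] :
    Subsemiring (MvPolynomial σ R) where
  carrier := {f | ∀ d, 0 ≤ f.coeff d}
  zero_mem' d := by simp
  one_mem' d := by
    classical
    rw [coeff_one]
    split_ifs <;> simp
  add_mem' hf hg d := by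
    rw [coeff_add]
    exact add_nonneg (hf d) (hg d)
  mul_mem' hf hg d := by
    classical
    rw [coeff_mul]
    exact Finset.sum_nonneg fun p _ => mul_nonneg (hf p.1) (hg p.2)

variable {σ R : Type*} [CommSemiring R] [PartialOrder R] [IsOrderedRing R]

theorem mem_nonnegCoeffs {f : MvPolynomial σ R} : f ∈ nonnegCoeffs σ R ↔ ∀ d, 0 ≤ f.coeff d :=
  Iff.rfl

theorem X_mem_nonnegCoeffs (i : σ) : X i ∈ nonnegCoeffs σ R := fun d => by
  classical
  rw [coeff_X]
  split_ifs <;> simp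

end MvPolynomial

open MvPolynomial

noncomputable def laguerreTridiag : Matrix ℕ ℕ Rxl := fun i j =>
  if j = i + 1 then 1 else if j = i then xv + lv + i else if i = j + 1 then i * xv else 0

theorem RFMat.Lmat_mul_apply (Q : ℕ → ℕ →₀ Rxl) (n k : ℕ) :
    (RFMat.mul Lmat Q n : ℕ →₀ Rxl) k = Q n k + n * Q (n - 1) k := by
  unfold RFMat.mul Lmat
  rw [Finsupp.sum_add_index' (fun j => zero_smul Rxl (Q j)) (fun j a b => add_smul a b (Q j)),
    Finsupp.sum_single_index (zero_smul Rxl (Q n)),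
    Finsupp.sum_single_index (zero_smul Rxl (Q (n - 1))), one_smul]
  rfl

theorem Lmat_mul_Uxmat_add_apply (n k : ℕ) :
    (RFMat.mul Lmat Uxmat n + Finsupp.single n lv) k = laguerreTridiag n k := by
  rw [Finsupp.add_apply, RFMat.Lmat_mul_apply Uxmat]
  rcases n with _ | n <;>
  · simp only [Uxmat, laguerreTridiag, Finsupp.add_apply, Finsupp.single_apply]
    push_cast
    split_ifs <;> first | omega | ring

theorem Pquad_apply (n k : ℕ) :
    Pquad n k = laguerreTridiag n k + n * laguerreTridiag (n - 1) k := by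
  rcases n with _ | _ | n <;>
  · simp only [Pquad, laguerreTridiag, Finsupp.add_apply, Finsupp.single_apply]
    push_cast
    split_ifs <;> first | omega | ring

theorem Pquad_eq_Lmat_mul :
    Pquad = RFMat.mul Lmat (fun n => RFMat.mul Lmat Uxmat n + Finsupp.single n lv) := by
  refine funext fun n => Finsupp.ext fun k => ?_
  rw [RFMat.Lmat_mul_apply, Lmat_mul_Uxmat_add_apply, Lmat_mul_Uxmat_add_apply, Pquad_apply]

theorem laguerreTridiag_mem (i j : ℕ) : laguerreTridiag i j ∈ nonnegCoeffs (Fin 2) ℤ := by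
  have hx : xv ∈ nonnegCoeffs (Fin 2) ℤ := X_mem_nonnegCoeffs 0
  have hl : lv ∈ nonnegCoeffs (Fin 2) ℤ := X_mem_nonnegCoeffs 1
  unfold laguerreTridiag
  split_ifs
  exacts [one_mem _, add_mem (add_mem hx hl) (natCast_mem _ i), mul_mem (natCast_mem _ i) hx,
    zero_mem _]

theorem laguerreTridiag_eq_zero (i j : ℕ) (h : i + 2 ≤ j ∨ j + 2 ≤ i) :
    laguerreTridiag i j = 0 := by
  unfold laguerreTridiag
  split_ifs <;> first | rfl | omega

theorem laguerreTridiag_contiguousMinor_add_two (n m : ℕ) :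
    laguerreTridiag.contiguousMinor n (m + 2) =
      (xv + lv + n) * laguerreTridiag.contiguousMinor (n + 1) (m + 1) -
        (n + 1) * xv * laguerreTridiag.contiguousMinor (n + 2) m := by
  have hsub : laguerreTridiag (n + 1) n = (n + 1) * xv := by
    rw [laguerreTridiag, if_neg (by omega), if_neg (by omega), if_pos rfl]
    push_cast
    rfl
  rw [Matrix.contiguousMinor_add_two laguerreTridiag_eq_zero, hsub]
  simp [laguerreTridiag]

theorem laguerreTridiag_contiguousMinor_mem (m : ℕ) : ∀ n,
    laguerreTridiag.contiguousMinor n m ∈ nonnegCoeffs (Fin 2) ℤ ∧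
      laguerreTridiag.contiguousMinor n (m + 1) -
        (lv + n) * laguerreTridiag.contiguousMinor (n + 1) m ∈ nonnegCoeffs (Fin 2) ℤ := by
  set D := laguerreTridiag.contiguousMinor
  have hx : xv ∈ nonnegCoeffs (Fin 2) ℤ := X_mem_nonnegCoeffs 0
  have hl : lv ∈ nonnegCoeffs (Fin 2) ℤ := X_mem_nonnegCoeffs 1
  induction m with
  | zero =>
    intro n
    have h0 (n : ℕ) : D n 0 = 1 := Matrix.det_fin_zero
    have h1 : D n 1 = xv + lv + n := by simp [D, Matrix.contiguousMinor, laguerreTridiag]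
    refine ⟨h0 n ▸ one_mem _, ?_⟩
    rw [h1, h0, show xv + lv + n - (lv + n) * 1 = xv by ring]
    exact hx
  | succ m ih =>
    intro n
    have hD : D n (m + 1) = (D n (m + 1) - (lv + n) * D (n + 1) m) + (lv + n) * D (n + 1) m := by
      ring
    refine ⟨hD ▸ add_mem (ih n).2 (mul_mem (add_mem hl (natCast_mem _ n)) (ih (n + 1)).1), ?_⟩
    have key : D n (m + 2) - (lv + n) * D (n + 1) (m + 1) =
        xv * ((D (n + 1) (m + 1) - (lv + (n + 1 : ℕ)) * D (n + 2) m) + lv * D (n + 2) m) := by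
      simp only [D]
      rw [laguerreTridiag_contiguousMinor_add_two]
      push_cast
      ring
    rw [key]
    exact mul_mem hx (add_mem (ih (n + 1)).2 (mul_mem hl (ih (n + 2)).1))

theorem isTotallyPositive_laguerreTridiag :
    laguerreTridiag.IsTotallyPositive (nonnegCoeffs (Fin 2) ℤ) :=
  Matrix.isTotallyPositive_of_tridiagonal laguerreTridiag_eq_zero laguerreTridiag_mem
    fun n m => (laguerreTridiag_contiguousMinor_mem m n).1

theorem isTotallyPositive_Pquad :
    (Matrix.of fun n k => Pquad n k).IsTotallyPositive (nonnegCoeffs (Fin 2) ℤ) := by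
  have hP : (Matrix.of fun n k => Pquad n k) =
      Matrix.of fun n k => 1 * laguerreTridiag n k + n * laguerreTridiag (n - 1) k := by
    ext n k
    simp [Pquad_apply]
  rw [hP]
  exact isTotallyPositive_laguerreTridiag.lowerBidiagonal_mul (fun _ => one_mem _)
    fun n => natCast_mem _ n

/-- `P = L·(L·U_x + λI)`, and consequently `P` is totally
positive in `ℤ[x,λ]` with the coefficientwise order: every minor is a
polynomial in `x, λ` with nonnegative coefficients. -/
theorem Pquad_factorization_and_totally_positive :
    Pquad = RFMat.mul Lmat (fun n => RFMat.mul Lmat Uxmat n + Finsupp.single n lv) ∧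
    (∀ (m : ℕ) (rr cc : Fin m → ℕ), StrictMono rr → StrictMono cc →
      ∀ d : Fin 2 →₀ ℕ,
        0 ≤ MvPolynomial.coeff d
          (Matrix.det (Matrix.of fun p q : Fin m => Pquad (rr p) (cc q)))) :=
  ⟨Pquad_eq_Lmat_mul, fun m rr cc hrr hcc =>
    mem_nonnegCoeffs.mp (isTotallyPositive_Pquad m rr cc hrr hcc)⟩
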